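/- arXiv:math/0104194 — 4 statements merged into one kernel-verified Lean document; each statement's English description precedes it below -/
import Mathlib

section
/- Let G be an ℵ₁-free abelian group of infinite rank and let c ∈ G be an element of infinite order generating a pure cyclic subgroup ⟨c⟩ of G. Then the quotient group G/⟨c⟩ is an ℵ₁-free abelian group. -/
/-!
Let `S` be a countable subgroup of `G ⧸ ⟨c⟩` and `T ≤ G` its preimage, so that `T` is countable,
hence free, and `S ≅ T ⧸ ⟨c⟩`. Purity makes `c` indivisible in `T`, and an indivisible element
of a free module over a PID is sent to `1` by some functional `f`. Then `T ⧸ ⟨c⟩ ≅ ker f`, a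
countable subgroup of `G`, hence free.
-/

open TensorProduct

theorem Module.Free.exists_dual_eq_one {R M : Type*} [CommRing R] [IsPrincipalIdealRing R]
    [AddCommGroup M] [Module R M] [Module.Free R M] {c : M}
    (hc : ∀ (r : R) (x : M), r • x = c → IsUnit r) : ∃ f : Module.Dual R M, f c = 1 := by
  let J : Ideal R := LinearMap.range (Module.Dual.eval R M c)
  let d := Submodule.IsPrincipal.generator J
  have hJ : J = Ideal.span {d} := (Ideal.span_singleton_generator J).symm
  let b := Module.Free.chooseBasis R M
  have hd_dvd : ∀ i, d ∣ b.repr c i := fun i => by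
    rw [← Ideal.mem_span_singleton, ← hJ]
    exact ⟨b.coord i, rfl⟩
  obtain ⟨g, hg⟩ : ∃ g : M, d • g = c := by
    change c ∈ LinearMap.range (LinearMap.lsmul R M d)
    rw [← b.linearCombination_repr c, Finsupp.linearCombination_apply]
    refine Submodule.sum_mem _ fun i _ => ?_
    obtain ⟨q, hq⟩ := hd_dvd i
    exact ⟨q • b i, by simp only [LinearMap.lsmul_apply, hq, mul_smul]⟩
  have hJ_top : J = ⊤ :=
    Ideal.eq_top_of_isUnit_mem J (Submodule.IsPrincipal.generator_mem J) (hc d g hg)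
  obtain ⟨f, hf⟩ : (1 : R) ∈ J := hJ_top ▸ Submodule.mem_top
  exact ⟨f, hf⟩

theorem Module.Free.of_injective_of_countable {G H : Type*} [AddCommGroup G] [AddCommGroup H]
    [Countable H] (hG : ∀ S : AddSubgroup G, Countable S → Module.Free ℤ S) (e : H →+ G)
    (he : Function.Injective e) : Module.Free ℤ H :=
  have := hG e.range e.rangeRestrict_surjective.countable
  Module.Free.of_equiv (AddMonoidHom.ofInjective he).symm.toIntLinearEquiv

noncomputable def AddMonoidHom.quotientZMultiplesEquivKer {H : Type*} [AddCommGroup H] {c : H}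
    (f : H →+ ℤ) (hf : f c = 1) : H ⧸ AddSubgroup.zmultiples c ≃+ f.ker :=
  let p : H →+ f.ker :=
    { toFun x := ⟨x - f x • c, by simp [hf]⟩
      map_zero' := by ext; simp
      map_add' x y := by ext; simp only [map_add, add_smul, AddSubgroup.coe_add]; abel }
  have hp : Function.Surjective p := fun x =>
    ⟨x, Subtype.ext <| by simp [p, AddMonoidHom.mem_ker.1 x.2]⟩
  have hker : p.ker = AddSubgroup.zmultiples c := by
    ext x
    rw [AddMonoidHom.mem_ker, AddSubgroup.mem_zmultiples_iff]
    constructor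
    · intro hx
      exact ⟨f x, (sub_eq_zero.1 (congrArg Subtype.val hx)).symm⟩
    · rintro ⟨k, rfl⟩
      exact Subtype.ext <| by simp [p, hf]
  (QuotientAddGroup.quotientAddEquivOfEq hker.symm).trans
    (QuotientAddGroup.quotientKerEquivOfSurjective p hp)

section ZMultiples

variable {G : Type*} [AddCommGroup G] {c : G}

theorem QuotientAddGroup.mem_comap_mk'_zmultiples_self
    (S : AddSubgroup (G ⧸ AddSubgroup.zmultiples c)) :
    c ∈ S.comap (QuotientAddGroup.mk' (AddSubgroup.zmultiples c)) := by
  rw [AddSubgroup.mem_comap, QuotientAddGroup.mk'_apply,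
    (QuotientAddGroup.eq_zero_iff c).2 (AddSubgroup.mem_zmultiples c)]
  exact S.zero_mem

noncomputable def QuotientAddGroup.comapQuotientZMultiplesEquiv
    (S : AddSubgroup (G ⧸ AddSubgroup.zmultiples c)) :
    S.comap (QuotientAddGroup.mk' (AddSubgroup.zmultiples c)) ⧸
      AddSubgroup.zmultiples ⟨c, mem_comap_mk'_zmultiples_self S⟩ ≃+ S :=
  let N := AddSubgroup.zmultiples c
  let π := (QuotientAddGroup.mk' N).addSubgroupComap S
  have hπ : Function.Surjective π :=
    (QuotientAddGroup.mk' N).addSubgroupComap_surjective_of_surjective S (mk'_surjective N)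
  have hker : π.ker = AddSubgroup.zmultiples ⟨c, mem_comap_mk'_zmultiples_self S⟩ := by
    ext x
    rw [AddMonoidHom.mem_ker, ← Subtype.val_inj]
    change ((x : G) : G ⧸ N) = 0 ↔ _
    rw [eq_zero_iff, AddSubgroup.mem_zmultiples_iff, AddSubgroup.mem_zmultiples_iff]
    simp only [Subtype.ext_iff, AddSubgroup.coe_zsmul]
  (quotientAddEquivOfEq hker.symm).trans (quotientKerEquivOfSurjective π hπ)

theorem isUnit_of_zsmul_eq_of_pure (hc : ∀ n : ℤ, n ≠ 0 → n • c ≠ 0)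
    (hpure : ∀ n : ℕ, 0 < n → ∀ x ∈ AddSubgroup.zmultiples c,
      (∃ g : G, (n : ℤ) • g = x) → ∃ u ∈ AddSubgroup.zmultiples c, (n : ℤ) • u = x)
    {n : ℤ} {x : G} (hx : n • x = c) : IsUnit n := by
  have hn : n ≠ 0 := by
    rintro rfl
    exact hc 1 one_ne_zero (by simpa using hx.symm)
  have hdiv : ∃ g : G, (n.natAbs : ℤ) • g = c :=
    ⟨n.sign • x, by rw [smul_smul, mul_comm, Int.sign_mul_natAbs, hx]⟩
  obtain ⟨_, ⟨m, rfl⟩, hm⟩ := hpure n.natAbs (Int.natAbs_pos.2 hn) c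
    (AddSubgroup.mem_zmultiples c) hdiv
  have hnm : (n.natAbs : ℤ) * m = 1 := by
    by_contra hne
    exact hc _ (sub_ne_zero.2 hne) (by rw [sub_smul, mul_smul, hm, one_smul, sub_self])
  exact Int.isUnit_iff_natAbs_eq.2
    (by exact_mod_cast Int.eq_one_of_mul_eq_one_right (by positivity) hnm)

end ZMultiples

theorem quotient_by_pure_cyclic_subgroup_aleph1_free_general
    (G : Type) [AddCommGroup G]
    (hG : ∀ S : AddSubgroup G, Countable S → Module.Free ℤ S)
    (c : G) (hc : ∀ n : ℤ, n ≠ 0 → n • c ≠ 0)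
    (hpure : ∀ n : ℕ, 0 < n → ∀ x ∈ AddSubgroup.zmultiples c,
      (∃ g : G, (n : ℤ) • g = x) → ∃ u ∈ AddSubgroup.zmultiples c, (n : ℤ) • u = x) :
    ∀ S : AddSubgroup (G ⧸ AddSubgroup.zmultiples c), Countable S → Module.Free ℤ S := by
  intro S hS
  let T := S.comap (QuotientAddGroup.mk' (AddSubgroup.zmultiples c))
  let c' : T := ⟨c, QuotientAddGroup.mem_comap_mk'_zmultiples_self S⟩
  let eS : T ⧸ AddSubgroup.zmultiples c' ≃+ S :=
    QuotientAddGroup.comapQuotientZMultiplesEquiv S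
  have : Countable (T ⧸ AddSubgroup.zmultiples c') := eS.toEquiv.countable_iff.2 hS
  have hT : Countable T :=
    (AddSubgroup.addGroupEquivQuotientProdAddSubgroup (s := .zmultiples c')).countable_iff.2
      inferInstance
  have : Module.Free ℤ T := hG T hT
  obtain ⟨f, hf⟩ := Module.Free.exists_dual_eq_one (c := c')
    fun n _ hx => isUnit_of_zsmul_eq_of_pure hc hpure (congrArg Subtype.val hx)
  have : Module.Free ℤ f.toAddMonoidHom.ker :=
    .of_injective_of_countable hG (T.subtype.comp f.toAddMonoidHom.ker.subtype)
      (Subtype.val_injective.comp Subtype.val_injective)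
  exact .of_equiv
    ((f.toAddMonoidHom.quotientZMultiplesEquivKer hf).symm.trans eS).toIntLinearEquiv

/-- Quotients of `ℵ₁`-free abelian groups modulo pure cyclic subgroups are `ℵ₁`-free:
if `G` is an `ℵ₁`-free abelian group (every countable subgroup is free abelian) of
infinite rank and `c ∈ G` has infinite order and generates a pure cyclic subgroup
`⟨c⟩`, then `G/⟨c⟩` is an `ℵ₁`-free abelian group. -/
theorem quotient_by_pure_cyclic_subgroup_aleph1_free
    (G : Type) [AddCommGroup G]
    (hG : ∀ S : AddSubgroup G, Countable S → Module.Free ℤ S)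
    (hrank : Cardinal.aleph0 ≤ Module.rank ℚ (ℚ ⊗[ℤ] G))
    (c : G) (hc : ∀ n : ℤ, n ≠ 0 → n • c ≠ 0)
    (hpure : ∀ n : ℕ, 0 < n → ∀ x ∈ AddSubgroup.zmultiples c,
      (∃ g : G, (n : ℤ) • g = x) → ∃ u ∈ AddSubgroup.zmultiples c, (n : ℤ) • u = x) :
    ∀ S : AddSubgroup (G ⧸ AddSubgroup.zmultiples c), Countable S → Module.Free ℤ S :=
  quotient_by_pure_cyclic_subgroup_aleph1_free_general G hG c hc hpure
end

section
/- Let R be a ring whose additive group is a free abelian group, let M be an R-module, and let c ∈ M be such that the map r ↦ c·r from R to M is injective (so the cyclic submodule cR is isomorphic to R). If the quotient M/cR is an ℵ₁-free R-module, then M is an ℵ₁-free R-module. -/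
open TensorProduct

/-- Key step in the proof of Lemma 3.1: let `R` be a ring whose additive group is free
abelian, `M` an `R`-module and `c ∈ M` such that `r ↦ r • c` is injective (so the cyclic
submodule generated by `c` is isomorphic to `R`).  If `M / cR` is an `ℵ₁`-free `R`-module
(every additive subgroup of finite rank, i.e. with finite `dim_ℚ (ℚ ⊗ S)`, is contained
in a free `R`-submodule), then so is `M`. -/
theorem aleph1_free_of_quotient_by_cyclic_aleph1_free
    (R M : Type) [Ring R] [AddCommGroup M] [Module R M] (hRfree : Module.Free ℤ R)
    (c : M) (hc : Function.Injective fun r : R => r • c)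
    (hquot : ∀ S : AddSubgroup (M ⧸ (Submodule.span R {c})),
      Module.rank ℚ (ℚ ⊗[ℤ] S) < Cardinal.aleph0 →
      ∃ N : Submodule R (M ⧸ (Submodule.span R {c})),
        (S : Set (M ⧸ (Submodule.span R {c}))) ⊆ (N : Set (M ⧸ (Submodule.span R {c}))) ∧
        Module.Free R N) :
    ∀ S : AddSubgroup M, Module.rank ℚ (ℚ ⊗[ℤ] S) < Cardinal.aleph0 →
      ∃ N : Submodule R M, (S : Set M) ⊆ (N : Set M) ∧ Module.Free R N := by
  intro S hS
  set q : Submodule R M := Submodule.span R {c} with hq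
  -- the image of S in the quotient
  set S' : AddSubgroup (M ⧸ q) := S.map q.mkQ.toAddMonoidHom with hS'def
  -- the image has finite rank
  have hrank : Module.rank ℚ (ℚ ⊗[ℤ] S') < Cardinal.aleph0 := by
    have hsurj : Function.Surjective (q.mkQ.toAddMonoidHom.addSubgroupMap S) :=
      q.mkQ.toAddMonoidHom.addSubgroupMap_surjective S
    set f : S →ₗ[ℤ] S' := (q.mkQ.toAddMonoidHom.addSubgroupMap S).toIntLinearMap with hf
    have hfsurj : Function.Surjective f := hsurj
    have h2 : Function.Surjective (f.baseChange ℚ) := by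
      rw [show (f.baseChange ℚ : ℚ ⊗[ℤ] S → ℚ ⊗[ℤ] S') = f.lTensor ℚ from
        LinearMap.baseChange_eq_ltensor f]
      exact LinearMap.lTensor_surjective ℚ hfsurj
    exact lt_of_le_of_lt ((f.baseChange ℚ).rank_le_of_surjective h2) hS
  obtain ⟨N', hsub, hfree⟩ := hquot S' hrank
  refine ⟨N'.comap q.mkQ, ?_, ?_⟩
  · intro x hx
    exact hsub (AddSubgroup.mem_map.2 ⟨x, hx, rfl⟩)
  · haveI := hfree
    haveI := hRfree
    set N : Submodule R M := N'.comap q.mkQ with hN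
    -- the restriction of mkQ to N, mapping onto N'
    have hmaps : ∀ x ∈ N, q.mkQ x ∈ N' := fun x hx => hx
    set f : N →ₗ[R] N' := q.mkQ.restrict hmaps with hfdef
    have hfsurj : Function.Surjective f := by
      rintro ⟨y, hy⟩
      obtain ⟨x, hx⟩ := q.mkQ_surjective y
      have hxN : x ∈ N := by
        show q.mkQ x ∈ N'
        rw [hx]; exact hy
      exact ⟨⟨x, hxN⟩, Subtype.ext hx⟩
    -- split the surjection using projectivity of the free module N'
    obtain ⟨s, hs⟩ := Module.projective_lifting_property f LinearMap.id hfsurj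
    have hsection : ∀ y : N', f (s y) = y := fun y => by
      have := congrArg (fun g => g y) hs
      simpa using this
    -- kernel and range of the splitting are complementary
    have hcompl : IsCompl (LinearMap.ker f) (LinearMap.range s) := by
      refine ⟨?_, ?_⟩
      · rw [disjoint_iff]
        apply le_bot_iff.1
        rintro x ⟨hker, y, rfl⟩
        have : y = 0 := by
          have := hsection y
          rw [LinearMap.mem_ker.1 hker] at this
          exact (by simpa using this.symm)
        simp [this]
      · rw [codisjoint_iff]
        apply top_le_iff.1
        intro x _
        have hx1 : x - s (f x) ∈ LinearMap.ker f := by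
          rw [LinearMap.mem_ker, map_sub, hsection, sub_self]
        have hx2 : s (f x) ∈ LinearMap.range s := ⟨f x, rfl⟩
        have : x = (x - s (f x)) + s (f x) := by abel
        rw [this]
        exact Submodule.add_mem_sup hx1 hx2
    -- `q` is a free module, being isomorphic to `R`
    have hcinj : Function.Injective (LinearMap.toSpanSingleton R M c) := by
      intro a b hab
      exact hc (by simpa [LinearMap.toSpanSingleton_apply] using hab)
    have hqfree : Module.Free R q := by
      have e0 : R ≃ₗ[R] LinearMap.range (LinearMap.toSpanSingleton R M c) :=
        LinearEquiv.ofInjective _ hcinj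
      have hqr : q = LinearMap.range (LinearMap.toSpanSingleton R M c) := by
        rw [hq]
        exact LinearMap.span_singleton_eq_range R M c
      exact Module.Free.of_equiv (e0.trans (LinearEquiv.ofEq _ _ hqr.symm))
    -- the kernel of f is isomorphic to q
    have hqle : q ≤ N := by
      intro x hx
      show q.mkQ x ∈ N'
      have : q.mkQ x = 0 := (Submodule.Quotient.mk_eq_zero q).2 hx
      rw [this]
      exact N'.zero_mem
    have hker : LinearMap.ker f = q.comap N.subtype := by
      ext x
      simp only [LinearMap.mem_ker, Submodule.mem_comap, hfdef, Submodule.subtype_apply]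
      constructor
      · intro h
        have : (f x : M ⧸ q) = 0 := by rw [h]; rfl
        have h2 : q.mkQ (x : M) = 0 := this
        exact (Submodule.Quotient.mk_eq_zero q).1 h2
      · intro h
        apply Subtype.ext
        show q.mkQ (x : M) = 0
        exact (Submodule.Quotient.mk_eq_zero q).2 h
    have hkerfree : Module.Free R (LinearMap.ker f) := by
      rw [hker]
      exact Module.Free.of_equiv (Submodule.comapSubtypeEquivOfLe hqle).symm
    -- range of s is free, being isomorphic to N'
    have hsinj : Function.Injective s := by
      intro a b hab
      have := congrArg f hab
      rw [hsection, hsection] at this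
      exact this
    have hrangefree : Module.Free R (LinearMap.range s) :=
      Module.Free.of_equiv (LinearEquiv.ofInjective s hsinj)
    -- conclude: N ≅ ker f × range s is free
    haveI := hkerfree
    haveI := hrangefree
    exact Module.Free.of_equiv (Submodule.prodEquivOfIsCompl _ _ hcompl)
end

section
/- Assume the following form of Martin's Axiom: for every nonempty partially ordered set P satisfying the countable chain condition (every set of pairwise incompatible elements of P is countable, where p, q ∈ P are compatible if they have a common upper bound in P) and every family 𝒟 of fewer than 2^ℵ₀ dense subsets of P (D ⊆ P is dense if for every p ∈ P there is q ∈ D with p ≤ q), there exists an upward-directed subset F ⊆ P intersecting every member of 𝒟. Then every ℵ₂-free abelian group G of cardinality less than 2^ℵ₀ is separable: for every e ∈ G of infinite order generating a pure cyclic subgroup ⟨e⟩ of G, the subgroup ⟨e⟩ is a direct summand of G (equivalently, there is a homomorphism Φ : G → ℤ with Φ(e) = 1). -/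
/-!
Apply Martin's axiom to the poset of partial homomorphisms `f : S → ℤ` with `f e = 1`, defined on
finitely generated pure subgroups `S` and ordered by extension. Since `G` is `ℵ₁`-free, the pure
closure of a finitely generated subgroup is finitely generated and free, so `f` extends across it;
hence each `D_g = {f | g ∈ dom f}` is dense. There are `|G| < 2^ℵ₀` of them, and the union of a
directed family meeting all of them is a homomorphism `Φ : G → ℤ` with `Φ e = 1`, whose kernel
complements `⟨e⟩`.

For the countable chain condition, `ℵ₁` conditions live in a pure subgroup `H` of size `ℵ₁`, which
is free. Each condition extends to the span of finitely many basis vectors of `H`; these extensions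
are finite partial functions from the basis to `ℤ`, and among uncountably many of those two agree
on their common domain, so they glue to a common extension.
-/

open Cardinal Submodule

theorem Set.exists_not_countable_fiber {κ β : Type*} [Countable β] {I : Set κ}
    (hI : ¬ I.Countable) (f : κ → β) : ∃ y, ¬ {k ∈ I | f k = y}.Countable := by
  by_contra! h
  refine hI ((Set.countable_iUnion h).mono fun k hk => ?_)
  exact Set.mem_iUnion.2 ⟨f k, hk, rfl⟩

theorem exists_ne_disjoint_of_countable_fibers {κ ι : Type*} {I : Set κ} (hI : ¬ I.Countable)
    (E : κ → Finset ι) (hE : ∀ x, {k ∈ I | x ∈ E k}.Countable) :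
    ∃ k ∈ I, ∃ l ∈ I, k ≠ l ∧ Disjoint (E k) (E l) := by
  have nonempty_of {s : Set κ} (hs : ¬ s.Countable) : s.Nonempty :=
    Set.nonempty_iff_ne_empty.2 fun h => hs (h ▸ Set.countable_empty)
  obtain ⟨k, hk⟩ := nonempty_of hI
  have hmeet : ({k} ∪ ⋃ x ∈ E k, {l ∈ I | x ∈ E l}).Countable :=
    (Set.countable_singleton k).union ((E k).countable_toSet.biUnion fun x _ => hE x)
  obtain ⟨l, hlI, hl⟩ := nonempty_of fun h => hI (h.of_sdiff hmeet)
  simp only [Set.singleton_union, Set.mem_insert_iff, Set.mem_iUnion, Set.mem_sep_iff,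
    not_or, not_exists] at hl
  exact ⟨k, hk, l, hlI, Ne.symm hl.1, Finset.disjoint_left.2 fun x hxk hxl => hl.2 x hxk ⟨hlI, hxl⟩⟩

/-- The poset of finite partial functions `ι ⇀ C` with `C` countable is ccc. -/
theorem exists_ne_agree_on_inter {κ ι C : Type*} [Countable C] {I : Set κ} (hI : ¬ I.Countable)
    (E : κ → Finset ι) (c : κ → ι → C) :
    ∃ k ∈ I, ∃ l ∈ I, k ≠ l ∧ ∀ x ∈ E k, x ∈ E l → c k x = c l x := by
  classical
  suffices ∀ (n : ℕ) (I : Set κ) (E : κ → Finset ι), ¬ I.Countable → (∀ k ∈ I, (E k).card = n) →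
      ∃ k ∈ I, ∃ l ∈ I, k ≠ l ∧ ∀ x ∈ E k, x ∈ E l → c k x = c l x by
    obtain ⟨n, hn⟩ := Set.exists_not_countable_fiber hI fun k => (E k).card
    obtain ⟨k, hk, l, hl, hkl, h⟩ := this n _ E hn fun k hk => hk.2
    exact ⟨k, hk.1, l, hl.1, hkl, h⟩
  intro n
  induction n with
  | zero =>
    intro I E hI hE
    obtain ⟨k, hk, l, hl, hkl, -⟩ := exists_ne_disjoint_of_countable_fibers hI E fun x =>
      Set.countable_empty.mono fun k hk => by simpa [Finset.card_eq_zero.1 (hE k hk.1)] using hk.2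
    exact ⟨k, hk, l, hl, hkl, by simp [Finset.card_eq_zero.1 (hE k hk)]⟩
  | succ n ih =>
    intro I E hI hE
    by_cases hfib : ∀ x, {k ∈ I | x ∈ E k}.Countable
    · obtain ⟨k, hk, l, hl, hkl, hdisj⟩ := exists_ne_disjoint_of_countable_fibers hI E hfib
      exact ⟨k, hk, l, hl, hkl, fun x hxk hxl => absurd hxl (Finset.disjoint_left.1 hdisj hxk)⟩
    push Not at hfib
    -- a point `x` lies in uncountably many domains: fix the value at `x` and remove `x`
    obtain ⟨x, hx⟩ := hfib
    obtain ⟨v, hv⟩ := Set.exists_not_countable_fiber hx fun k => c k x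
    obtain ⟨k, ⟨⟨hkI, hxk⟩, hck⟩, l, ⟨⟨hlI, hxl⟩, hcl⟩, hkl, hagree⟩ :=
      ih _ (fun k => (E k).erase x) hv fun k hk => by
        rw [Finset.card_erase_of_mem hk.1.2, hE k hk.1.1, Nat.add_sub_cancel]
    refine ⟨k, hkI, l, hlI, hkl, fun y hyk hyl => ?_⟩
    by_cases hyx : y = x
    · subst hyx
      exact hck.trans hcl.symm
    · exact hagree y (Finset.mem_erase.2 ⟨hyx, hyk⟩) (Finset.mem_erase.2 ⟨hyx, hyl⟩)

theorem Submodule.FG.countable {R M : Type*} [Semiring R] [Countable R] [AddCommMonoid M]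
    [Module R M] {U : Submodule R M} (hU : U.FG) : Countable U :=
  have : Module.Finite R U := Module.Finite.iff_fg.2 hU
  Finsupp.Countable.of_moduleFinite (R := R)

theorem Submodule.FG.comap_subtype {R M : Type*} [Semiring R] [AddCommMonoid M] [Module R M]
    {U H : Submodule R M} (hU : U.FG) (hUH : U ≤ H) : (U.comap H.subtype).FG :=
  fg_of_fg_map_injective _ H.injective_subtype (by rwa [map_comap_subtype, inf_of_le_right hUH])

theorem LinearMap.comp_subtype_span_eq {R M N : Type*} [Semiring R] [AddCommMonoid M] [Module R M]
    [AddCommMonoid N] [Module R N] {s : Set M} {Ψ : M →ₗ[R] N} {g : span R s →ₗ[R] N}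
    (h : ∀ x (hx : x ∈ s), Ψ x = g ⟨x, subset_span hx⟩) : Ψ ∘ₗ (span R s).subtype = g :=
  LinearMap.ext_on span_span_coe_preimage fun x hx => h x hx

theorem LinearPMap.le_of_comp_inclusion_eq {R E F : Type*} [Ring R] [AddCommGroup E] [Module R E]
    [AddCommGroup F] [Module R F] {f : E →ₗ.[R] F} {T : Submodule R E} (hfT : f.domain ≤ T)
    {ψ : T →ₗ[R] F} (hψ : ψ ∘ₗ inclusion hfT = f.toFun) : f ≤ ⟨T, ψ⟩ :=
  ⟨hfT, fun x _ hxy => (LinearMap.congr_fun hψ x).symm.trans (congrArg ψ (Subtype.ext hxy))⟩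

theorem AddMonoidHom.isCompl_zmultiples_ker {G : Type*} [AddCommGroup G] {e : G} (Φ : G →+ ℤ)
    (he : Φ e = 1) : IsCompl (AddSubgroup.zmultiples e) Φ.ker := by
  constructor
  · rw [AddSubgroup.disjoint_def]
    rintro _ ⟨k, rfl⟩ hk
    simp_all
  · rw [codisjoint_iff, eq_top_iff]
    intro g _
    rw [show g = Φ g • e + (g - Φ g • e) by abel]
    exact AddSubgroup.add_mem_sup (AddSubgroup.zsmul_mem_zmultiples e _) (by simp [he])

namespace Module.Basis

variable {κ ι R M N : Type*}

theorem exists_finset_le_span [Semiring R] [AddCommMonoid M] [Module R M] (b : Basis ι R M)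
    {U : Submodule R M} (hU : U.FG) : ∃ E : Finset ι, U ≤ span R (b '' E) := by
  classical
  obtain ⟨s, rfl⟩ := hU
  refine ⟨s.biUnion fun x => (b.repr x).support, span_le.2 fun x hx => ?_⟩
  refine span_mono (Set.image_mono ?_) (b.mem_span_repr_support x)
  exact Finset.coe_subset.2 (Finset.subset_biUnion_of_mem (fun x => (b.repr x).support) hx)

theorem exists_ne_common_extension [CommSemiring R] [AddCommMonoid M] [Module R M]
    [AddCommMonoid N] [Module R N] [Countable N] [Uncountable κ] (b : Basis ι R M)
    (E : κ → Finset ι) (g : ∀ k, span R (b '' E k) →ₗ[R] N) :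
    ∃ k l, k ≠ l ∧ ∃ Ψ : M →ₗ[R] N,
      Ψ ∘ₗ (span R (b '' E k)).subtype = g k ∧ Ψ ∘ₗ (span R (b '' E l)).subtype = g l := by
  classical
  let c k i : N := if h : i ∈ E k then g k ⟨b i, subset_span ⟨i, h, rfl⟩⟩ else 0
  have hc : ∀ k i (h : i ∈ E k), c k i = g k ⟨b i, subset_span ⟨i, h, rfl⟩⟩ :=
    fun k i h => dif_pos h
  obtain ⟨k, -, l, -, hkl, hagree⟩ :=
    exists_ne_agree_on_inter (I := Set.univ) Set.not_countable_univ E c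
  refine ⟨k, l, hkl, b.constr R fun i => if i ∈ E k then c k i else c l i, ?_, ?_⟩ <;>
    refine LinearMap.comp_subtype_span_eq ?_ <;> rintro _ ⟨i, hi, rfl⟩ <;>
    rw [Finset.mem_coe] at hi <;> rw [constr_basis]
  · rw [if_pos hi, hc k i hi]
  · by_cases hik : i ∈ E k
    · rw [if_pos hik, hagree i hik hi, hc l i hi]
    · rw [if_neg hik, hc l i hi]

end Module.Basis

namespace Submodule

variable {M : Type*} [AddCommGroup M]

/-- In a torsion-free group this is the usual purity `U ∩ nM = nU`. -/
def IsPure (U : Submodule ℤ M) : Prop :=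
  ∀ ⦃n : ℤ⦄ ⦃x : M⦄, n ≠ 0 → n • x ∈ U → x ∈ U

def pureClosure (U : Submodule ℤ M) : Submodule ℤ M where
  carrier := {x | ∃ n : ℤ, n ≠ 0 ∧ n • x ∈ U}
  zero_mem' := ⟨1, one_ne_zero, by simp⟩
  add_mem' := by
    rintro x y ⟨n, hn, hnx⟩ ⟨m, hm, hmy⟩
    refine ⟨m * n, mul_ne_zero hm hn, ?_⟩
    rw [smul_add, mul_smul, mul_comm, mul_smul]
    exact U.add_mem (U.smul_mem m hnx) (U.smul_mem n hmy)
  smul_mem' := by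
    rintro c x ⟨n, hn, hnx⟩
    exact ⟨n, hn, by rw [smul_comm]; exact U.smul_mem c hnx⟩

variable {U V : Submodule ℤ M}

theorem mem_pureClosure {x : M} : x ∈ U.pureClosure ↔ ∃ n : ℤ, n ≠ 0 ∧ n • x ∈ U := Iff.rfl

theorem le_pureClosure (U : Submodule ℤ M) : U ≤ U.pureClosure :=
  fun x hx => ⟨1, one_ne_zero, by simpa using hx⟩

theorem isPure_pureClosure (U : Submodule ℤ M) : U.pureClosure.IsPure := by
  rintro n x hn ⟨m, hm, hmx⟩
  exact ⟨m * n, mul_ne_zero hm hn, by rwa [mul_smul]⟩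

theorem IsPure.pureClosure_le (hV : V.IsPure) (hUV : U ≤ V) : U.pureClosure ≤ V :=
  fun _ ⟨_, hn, hnx⟩ => hV hn (hUV hnx)

theorem IsPure.comap {N : Type*} [AddCommGroup N] (hU : U.IsPure) (f : N →ₗ[ℤ] M) :
    (U.comap f).IsPure := fun n x hn hx => hU hn (by simpa using hx)

theorem _root_.Module.Basis.isPure_span_image {ι : Type*} (b : Module.Basis ι ℤ M) (E : Set ι) :
    (span ℤ (b '' E)).IsPure := by
  intro n x hn hx
  rw [b.mem_span_image, map_zsmul, Finsupp.support_smul_eq hn] at hx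
  exact b.mem_span_image.2 hx

theorem mk_pureClosure_le [IsAddTorsionFree M] (U : Submodule ℤ M) :
    #U.pureClosure ≤ max ℵ₀ #U := by
  choose n hn hnU using fun x : U.pureClosure => mem_pureClosure.1 x.2
  have hinj : Function.Injective fun x => (n x, (⟨n x • (x : M), hnU x⟩ : U)) := by
    intro x y hxy
    simp only [Prod.mk.injEq, Subtype.mk.injEq] at hxy
    rw [hxy.1] at hxy
    exact Subtype.ext (smul_right_injective M (hn y) hxy.2)
  calc #U.pureClosure ≤ #(ℤ × U) := mk_le_of_injective hinj
    _ = ℵ₀ * #U := by simp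
    _ ≤ max ℵ₀ #U := mul_le_max_of_aleph0_le_left le_rfl

theorem mk_span_le (X : Set M) : #(span ℤ X) ≤ max ℵ₀ #X := by
  rcases isEmpty_or_nonempty X with hX | hX
  · rw [Set.isEmpty_coe_sort.1 hX, span_empty]
    exact mk_le_aleph0.trans (le_max_left _ _)
  · rw [Finsupp.span_eq_range_linearCombination]
    refine mk_range_le.trans ?_
    simp [mk_finsupp_lift_of_infinite', max_comm]

theorem FG.pureClosure [IsAddTorsionFree M]
    (hfree : ∀ S : Submodule ℤ M, Countable S → Module.Free ℤ S) (hU : U.FG) :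
    U.pureClosure.FG := by
  have := hU.countable
  have : Countable U.pureClosure := by
    rw [← Cardinal.mk_le_aleph0_iff]
    exact (mk_pureClosure_le U).trans (max_le le_rfl mk_le_aleph0)
  have := hfree _ this
  let b := Module.Free.chooseBasis ℤ U.pureClosure
  obtain ⟨E, hE⟩ := b.exists_finset_le_span (hU.comap_subtype U.le_pureClosure)
  have htop : ⊤ ≤ span ℤ (b '' E) := fun x _ =>
    let ⟨_, hn, hnx⟩ := mem_pureClosure.1 x.2
    b.isPure_span_image E hn (hE hnx)
  exact (Submodule.fg_top _).1 (top_le_iff.1 htop ▸ fg_span ((E.finite_toSet).image b))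

theorem IsPure.exists_comp_subtype_eq [Module.Finite ℤ M] (hU : U.IsPure) (φ : U →ₗ[ℤ] ℤ) :
    ∃ Φ : M →ₗ[ℤ] ℤ, Φ ∘ₗ U.subtype = φ := by
  -- `M ⧸ U` is finitely generated and torsion-free, hence free, so `U` is a direct summand
  have : Module.IsTorsionFree ℤ (M ⧸ U) := by
    refine Module.isTorsionFree_iff_smul_eq_zero.2 fun n q hq => ?_
    obtain ⟨x, rfl⟩ := U.mkQ_surjective q
    simp only [mkQ_apply, ← Quotient.mk_smul, Quotient.mk_eq_zero] at hq ⊢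
    exact (eq_or_ne n 0).imp_right fun hn => hU hn hq
  obtain ⟨σ, hσ⟩ := Module.projective_lifting_property U.mkQ LinearMap.id U.mkQ_surjective
  have hsplit := ((LinearMap.exact_subtype_mkQ U).split_tfae U.injective_subtype
    U.mkQ_surjective).out 0 1
  obtain ⟨ρ, hρ⟩ := hsplit.1 ⟨σ, hσ⟩
  exact ⟨φ ∘ₗ ρ, by rw [LinearMap.comp_assoc, hρ, LinearMap.comp_id]⟩

theorem IsPure.exists_comp_inclusion_eq (hU : U.IsPure) (hUV : U ≤ V) (hV : V.FG)
    (φ : U →ₗ[ℤ] ℤ) : ∃ ψ : V →ₗ[ℤ] ℤ, ψ ∘ₗ inclusion hUV = φ := by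
  have : Module.Finite ℤ V := Module.Finite.iff_fg.2 hV
  obtain ⟨ψ, hψ⟩ := (hU.comap V.subtype).exists_comp_subtype_eq
    (φ ∘ₗ (comapSubtypeEquivOfLe hUV).toLinearMap)
  refine ⟨ψ, LinearMap.ext fun x => ?_⟩
  have := LinearMap.congr_fun hψ ((comapSubtypeEquivOfLe hUV).symm x)
  simp only [comapSubtypeEquivOfLe_symm_apply, LinearMap.coe_comp, coe_subtype,
    Function.comp_apply, LinearEquiv.coe_coe] at this
  exact this

end Submodule

section PartialSplittings

variable {G : Type*} [AddCommGroup G]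

theorem isAddTorsionFree_of_forall_countable_free
    (hfree : ∀ S : Submodule ℤ G, Countable S → Module.Free ℤ S) : IsAddTorsionFree G := by
  refine Module.isTorsionFree_int_iff_isAddTorsionFree.1
    (Module.isTorsionFree_iff_smul_eq_zero.2 fun n x hnx => ?_)
  have := hfree _ (fg_span_singleton x).countable
  have : n • (⟨x, mem_span_singleton_self x⟩ : ℤ ∙ x) = 0 := Subtype.ext hnx
  exact (smul_eq_zero.1 this).imp_right (congrArg Subtype.val)

theorem isPure_span_singleton [IsAddTorsionFree G] {e : G}
    (hpure : ∀ n : ℕ, 0 < n → ∀ x ∈ AddSubgroup.zmultiples e,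
      (∃ g : G, (n : ℤ) • g = x) → ∃ u ∈ AddSubgroup.zmultiples e, (n : ℤ) • u = x) :
    (ℤ ∙ e).IsPure := by
  have hzm : ∀ y, y ∈ ℤ ∙ e ↔ y ∈ AddSubgroup.zmultiples e := fun y =>
    SetLike.ext_iff.1 (span_singleton_toAddSubgroup_eq_zmultiples e) y
  have hpos : ∀ m : ℕ, 0 < m → ∀ y, (m : ℤ) • y ∈ ℤ ∙ e → y ∈ ℤ ∙ e := by
    intro m hm y hy
    obtain ⟨u, hu, hmu⟩ := hpure m hm _ ((hzm _).1 hy) ⟨y, rfl⟩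
    rwa [← smul_right_injective G (by omega : (m : ℤ) ≠ 0) hmu, hzm]
  intro n x hn hx
  rcases Int.natAbs_eq n with h | h <;> rw [h] at hx
  · exact hpos _ (Int.natAbs_pos.2 hn) x hx
  · rw [neg_smul, ← smul_neg] at hx
    simpa using neg_mem (hpos _ (Int.natAbs_pos.2 hn) _ hx)

def partialSplittings (e : G) : Set (G →ₗ.[ℤ] ℤ) :=
  {f | f.domain.FG ∧ f.domain.IsPure ∧ ∃ he : e ∈ f.domain, f ⟨e, he⟩ = 1}

variable {e : G}

theorem mem_partialSplittings_of_le {f g : G →ₗ.[ℤ] ℤ} (hf : f ∈ partialSplittings e)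
    (hfg : f ≤ g) (hg : g.domain.FG) (hg' : g.domain.IsPure) : g ∈ partialSplittings e :=
  let ⟨_, _, he, hfe⟩ := hf
  ⟨hg, hg', hfg.1 he, (LinearPMap.apply_comp_inclusion hfg ⟨e, he⟩).symm.trans hfe⟩

theorem span_singleton_mem_partialSplittings [IsAddTorsionFree G] (he : e ≠ 0)
    (hpure : (ℤ ∙ e).IsPure) : ⟨ℤ ∙ e, LinearEquiv.coord ℤ G e he⟩ ∈ partialSplittings e :=
  ⟨fg_span_singleton e, hpure, mem_span_singleton_self e, LinearEquiv.coord_self ℤ G e he⟩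

theorem exists_le_mem_domain [IsAddTorsionFree G]
    (hfree : ∀ S : Submodule ℤ G, Countable S → Module.Free ℤ S) {f : G →ₗ.[ℤ] ℤ}
    (hf : f ∈ partialSplittings e) (g : G) :
    ∃ f' ∈ partialSplittings e, f ≤ f' ∧ g ∈ f'.domain := by
  set T := (f.domain ⊔ ℤ ∙ g).pureClosure
  have hfT : f.domain ≤ T := le_sup_left.trans (le_pureClosure _)
  have hT : T.FG := (hf.1.sup (fg_span_singleton g)).pureClosure hfree
  obtain ⟨ψ, hψ⟩ := hf.2.1.exists_comp_inclusion_eq hfT hT f.toFun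
  have hle := LinearPMap.le_of_comp_inclusion_eq hfT hψ
  exact ⟨_, mem_partialSplittings_of_le hf hle hT (isPure_pureClosure _), hle,
    le_pureClosure _ (mem_sup_right (mem_span_singleton_self g))⟩

theorem exists_span_finset_extension {H : Submodule ℤ G} {ι : Type*} (b : Module.Basis ι ℤ H)
    {f : G →ₗ.[ℤ] ℤ} (hfg : f.domain.FG) (hpure : f.domain.IsPure) (hfH : f.domain ≤ H) :
    ∃ (E : Finset ι) (g : span ℤ (b '' E) →ₗ[ℤ] ℤ),
      ∀ Ψ : H →ₗ[ℤ] ℤ, Ψ ∘ₗ (span ℤ (b '' E)).subtype = g → Ψ ∘ₗ inclusion hfH = f.toFun := by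
  obtain ⟨E, hE⟩ := b.exists_finset_le_span (hfg.comap_subtype hfH)
  obtain ⟨g, hg⟩ := (hpure.comap H.subtype).exists_comp_inclusion_eq hE
    (fg_span (E.finite_toSet.image b)) (f.toFun ∘ₗ (comapSubtypeEquivOfLe hfH).toLinearMap)
  refine ⟨E, g, fun Ψ hΨ => LinearMap.ext fun x => ?_⟩
  have := LinearMap.congr_fun hg ((comapSubtypeEquivOfLe hfH).symm x)
  rw [← hΨ] at this
  simp only [comapSubtypeEquivOfLe_symm_apply, LinearMap.coe_comp, coe_subtype,
    Function.comp_apply, coe_inclusion, LinearEquiv.coe_coe, LinearPMap.toFun_eq_coe] at this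
  exact this

theorem exists_ne_compatible [IsAddTorsionFree G]
    (hfree : ∀ S : Submodule ℤ G, #S ≤ ℵ₁ → Module.Free ℤ S) {A : Set (partialSplittings e)}
    (hA : ¬ A.Countable) : ∃ p ∈ A, ∃ q ∈ A, p ≠ q ∧ ∃ r, p ≤ r ∧ q ≤ r := by
  obtain ⟨B, hBA, hB⟩ := le_mk_iff_exists_subset (s := A) |>.1 <| aleph_one_le_iff.2 <|
    aleph0_lt_mk_iff.2 <| not_countable_iff.1 <| Set.countable_coe_iff.not.2 hA
  have : Uncountable B := by rw [← aleph0_lt_mk_iff, hB]; exact aleph0_lt_aleph_one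
  set X := ⋃ p ∈ B, (p.1.domain : Set G)
  set H := (span ℤ X).pureClosure
  have hpH : ∀ p ∈ B, p.1.domain ≤ H := fun p hp x hx =>
    le_pureClosure _ (subset_span (Set.mem_biUnion hp hx))
  have hX : #X ≤ ℵ₁ := by
    refine (mk_biUnion_le _ B).trans (mul_le_of_le (aleph0_le_aleph 1) hB.le ?_)
    exact ciSup_le' fun p => (mk_le_aleph0_iff.2 p.1.2.1.countable).trans (aleph0_le_aleph 1)
  have hH : #H ≤ ℵ₁ := (mk_pureClosure_le _).trans <| max_le (aleph0_le_aleph 1) <|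
    (mk_span_le X).trans (max_le (aleph0_le_aleph 1) hX)
  have := hfree H hH
  let b := Module.Free.chooseBasis ℤ H
  choose E g hg using fun p : B => exists_span_finset_extension b p.1.2.1 p.1.2.2.1 (hpH p p.2)
  obtain ⟨p, q, hpq, Ψ, hΨp, hΨq⟩ := b.exists_ne_common_extension E g
  set T := (p.1.1.domain ⊔ q.1.1.domain).pureClosure
  have hTH : T ≤ H := (isPure_pureClosure _).pureClosure_le (sup_le (hpH p p.2) (hpH q q.2))
  have hpr := LinearPMap.le_of_comp_inclusion_eq (ψ := Ψ ∘ₗ inclusion hTH)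
    (le_sup_left.trans (le_pureClosure _)) (by rw [← hg p Ψ hΨp]; rfl)
  have hqr := LinearPMap.le_of_comp_inclusion_eq (ψ := Ψ ∘ₗ inclusion hTH)
    (le_sup_right.trans (le_pureClosure _)) (by rw [← hg q Ψ hΨq]; rfl)
  have hT : T.FG := (p.1.2.1.sup q.1.2.1).pureClosure fun S _ =>
    hfree S (mk_le_aleph0.trans (aleph0_le_aleph 1))
  have hr := mem_partialSplittings_of_le p.1.2 hpr hT (isPure_pureClosure _)
  exact ⟨p, hBA p.2, q, hBA q.2, fun h => hpq (Subtype.ext h), ⟨_, hr⟩, hpr, hqr⟩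

theorem exists_eq_one_of_directed {F : Set (partialSplittings e)}
    (hF : ∀ p ∈ F, ∀ q ∈ F, ∃ r ∈ F, p ≤ r ∧ q ≤ r) (hmeet : ∀ g, ∃ p ∈ F, g ∈ p.1.domain) :
    ∃ Φ : G →ₗ[ℤ] ℤ, Φ e = 1 := by
  have hc : DirectedOn (· ≤ ·) (Subtype.val '' F) := by
    rintro _ ⟨p, hp, rfl⟩ _ ⟨q, hq, rfl⟩
    obtain ⟨r, hr, hpr, hqr⟩ := hF p hp q hq
    exact ⟨r, ⟨r, hr, rfl⟩, hpr, hqr⟩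
  set f := LinearPMap.sSup _ hc
  have hle : ∀ p ∈ F, p.1 ≤ f := fun p hp => LinearPMap.le_sSup hc ⟨p, hp, rfl⟩
  have hdom : ∀ g, g ∈ f.domain := fun g =>
    let ⟨p, hp, hg⟩ := hmeet g
    (hle p hp).1 hg
  obtain ⟨p, hp, -⟩ := hmeet e
  obtain ⟨-, -, he, hpe⟩ := p.2
  exact ⟨f.toFun ∘ₗ LinearMap.codRestrict f.domain LinearMap.id hdom,
    (LinearPMap.apply_comp_inclusion (hle p hp) ⟨e, he⟩).symm.trans hpe⟩

end PartialSplittings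

/-- **Theorem 5.1.** Assume Martin's Axiom (for every nonempty ccc partial order and any
family of fewer than `2^ℵ₀` dense sets there is an upward-directed set meeting all of
them).  Then every `ℵ₂`-free abelian group `G` (every subgroup of cardinality `≤ ℵ₁` is
free abelian) of cardinality `< 2^ℵ₀` is separable: for every `e ∈ G` of infinite order
generating a pure cyclic subgroup, `⟨e⟩` is a direct summand of `G`; equivalently there
is a homomorphism `Φ : G → ℤ` with `Φ e = 1`. -/
theorem separable_of_martins_axiom
    (MA : ∀ (P : Type) [PartialOrder P], Nonempty P →
      (∀ A : Set P, (∀ p ∈ A, ∀ q ∈ A, p ≠ q → ¬∃ r : P, p ≤ r ∧ q ≤ r) → A.Countable) →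
      ∀ D : Set (Set P), Cardinal.mk D < Cardinal.continuum →
        (∀ d ∈ D, ∀ p : P, ∃ q ∈ d, p ≤ q) →
        ∃ F : Set P, (∀ p ∈ F, ∀ q ∈ F, ∃ r ∈ F, p ≤ r ∧ q ≤ r) ∧ ∀ d ∈ D, (F ∩ d).Nonempty)
    (G : Type) [AddCommGroup G]
    (hG : ∀ S : AddSubgroup G, Cardinal.mk S ≤ Cardinal.aleph 1 → Module.Free ℤ S)
    (hcard : Cardinal.mk G < Cardinal.continuum)
    (e : G) (he : ∀ n : ℤ, n ≠ 0 → n • e ≠ 0)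
    (hpure : ∀ n : ℕ, 0 < n → ∀ x ∈ AddSubgroup.zmultiples e,
      (∃ g : G, (n : ℤ) • g = x) → ∃ u ∈ AddSubgroup.zmultiples e, (n : ℤ) • u = x) :
    (∃ B : AddSubgroup G, AddSubgroup.zmultiples e ⊓ B = ⊥ ∧ AddSubgroup.zmultiples e ⊔ B = ⊤) ∧
    (∃ Φ : G →+ ℤ, Φ e = 1) := by
  have hfree : ∀ S : Submodule ℤ G, #S ≤ ℵ₁ → Module.Free ℤ S := fun S => hG S.toAddSubgroup
  have hfree₀ : ∀ S : Submodule ℤ G, Countable S → Module.Free ℤ S := fun S _ =>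
    hfree S (mk_le_aleph0.trans (aleph0_le_aleph 1))
  have := isAddTorsionFree_of_forall_countable_free hfree₀
  have he₀ : e ≠ 0 := by simpa using he 1 one_ne_zero
  obtain ⟨F, hFdir, hFmeet⟩ := MA (partialSplittings e)
    ⟨⟨_, span_singleton_mem_partialSplittings he₀ (isPure_span_singleton hpure)⟩⟩
    (fun A hA => by_contra fun hA' =>
      let ⟨p, hp, q, hq, hpq, hr⟩ := exists_ne_compatible hfree hA'
      hA p hp q hq hpq hr)
    (Set.range fun g => {p | g ∈ p.1.domain}) (mk_range_le.trans_lt hcard)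
    (by
      rintro _ ⟨g, rfl⟩ p
      obtain ⟨f, hf, hpf, hg⟩ := exists_le_mem_domain hfree₀ p.2 g
      exact ⟨⟨f, hf⟩, hg, hpf⟩)
  obtain ⟨Φ, hΦ⟩ := exists_eq_one_of_directed hFdir fun g => hFmeet _ ⟨g, rfl⟩
  have hcompl := Φ.toAddMonoidHom.isCompl_zmultiples_ker hΦ
  exact ⟨⟨_, hcompl.inf_eq_bot, hcompl.sup_eq_top⟩, Φ.toAddMonoidHom, hΦ⟩
end

section
/- Let G be an ℵ₂-free abelian group, let D be a pure, finitely generated subgroup of G, let φ : D → ℤ be a group homomorphism, and let g ∈ G. Then there exists a pure, finitely generated subgroup D' of G with D ⊆ D' and g ∈ D', and a group homomorphism φ' : D' → ℤ extending φ. Moreover, D' decomposes as D' = D ⊕ C for some subgroup C of D'. -/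
/-!
Let `E` be generated by `D` and `g`, and let `D'` be its purification `{x | n • x ∈ E for some
n > 0}`, which is pure by construction. Cyclic subgroups are free by `ℵ₂`-freeness, so `G` is
torsion-free; hence `D'` is countable and therefore free. As `D'/E` is torsion, `D'` has the same
finite rank as `E`, so `D'` is finitely generated. Purity of `D` makes `D'/D` torsion-free, hence
free by Pontrjagin's theorem for finitely generated groups, so `D` is a direct summand of `D'`;
projecting onto `D` extends `φ`.
-/

theorem isAddTorsionFree_of_forall_countable_free_s17 {G : Type*} [AddCommGroup G]
    (h : ∀ S : AddSubgroup G, Countable S → Module.Free ℤ S) : IsAddTorsionFree G := by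
  refine IsAddTorsionFree.of_not_isOfFinAddOrder fun x hx hfin => ?_
  have := h (AddSubgroup.zmultiples x) inferInstance
  have := IsAddTorsionFree.of_isTorsionFree ℤ (AddSubgroup.zmultiples x)
  have hfin' : IsOfFinAddOrder (⟨x, AddSubgroup.mem_zmultiples x⟩ : AddSubgroup.zmultiples x) :=
    AddSubmonoid.isOfFinAddOrder_coe.1 hfin
  exact not_isOfFinAddOrder_of_isAddTorsionFree (by simpa using hx) hfin'

theorem Module.finite_of_free_of_isTorsion_quotient {R M : Type*} [CommRing R] [IsDomain R]
    [AddCommGroup M] [Module R M] [Module.Free R M] (N : Submodule R M) [Module.Finite R N]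
    (hN : ∀ x : M, ∃ a : R, a ≠ 0 ∧ a • x ∈ N) : Module.Finite R M := by
  have hq : Module.rank R (M ⧸ N) = 0 := rank_eq_zero_iff.2 fun q => by
    obtain ⟨x, rfl⟩ := N.mkQ_surjective q
    obtain ⟨a, ha, hax⟩ := hN x
    exact ⟨a, ha, by rwa [← map_smul, Submodule.mkQ_apply, Submodule.Quotient.mk_eq_zero]⟩
  rw [← Module.rank_lt_aleph0_iff, ← rank_quotient_add_rank_of_isDomain N, hq, zero_add]
  exact Module.rank_lt_aleph0 R N

theorem Submodule.exists_isCompl_of_projective_quotient {R M : Type*} [Ring R] [AddCommGroup M]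
    [Module R M] (N : Submodule R M) [Module.Projective R (M ⧸ N)] :
    ∃ C : Submodule R M, IsCompl N C := by
  obtain ⟨s, hs⟩ := N.mkQ.exists_rightInverse_of_surjective N.range_mkQ
  have hsq : ∀ q, N.mkQ (s q) = q := LinearMap.congr_fun hs
  refine ⟨LinearMap.range s, disjoint_iff.2 (eq_bot_iff.2 ?_), codisjoint_iff.2 (eq_top_iff.2 ?_)⟩
  · rintro _ ⟨hN, q, rfl⟩
    have hq : q = 0 := by rw [← hsq q, mkQ_apply, (Quotient.mk_eq_zero N).2 hN]
    rw [mem_bot, hq, map_zero]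
  · intro x _
    have hx : x - s (N.mkQ x) ∈ N := by
      rw [← Quotient.mk_eq_zero, ← mkQ_apply, map_sub, hsq, sub_self]
    simpa using add_mem_sup hx (LinearMap.mem_range_self s (N.mkQ x))

namespace AddSubgroup

variable {G : Type*} [AddCommGroup G]

def IsPure (H : AddSubgroup G) : Prop :=
  ∀ n : ℕ, 0 < n → ∀ x ∈ H, (∃ g : G, (n : ℤ) • g = x) → ∃ u ∈ H, (n : ℤ) • u = x

theorem IsPure.mem_of_zsmul_mem [IsAddTorsionFree G] {H : AddSubgroup G} (hH : H.IsPure)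
    {n : ℕ} (hn : 0 < n) {x : G} (hx : (n : ℤ) • x ∈ H) : x ∈ H := by
  obtain ⟨u, hu, hux⟩ := hH n hn _ hx ⟨x, rfl⟩
  rwa [← zsmul_right_injective (by omega) hux]

theorem IsPure.addSubgroupOf [IsAddTorsionFree G] {H : AddSubgroup G} (hH : H.IsPure)
    (K : AddSubgroup G) : (H.addSubgroupOf K).IsPure := by
  rintro n hn _ hx ⟨y, rfl⟩
  exact ⟨y, hH.mem_of_zsmul_mem hn hx, rfl⟩

theorem IsPure.isAddTorsionFree_quotient [IsAddTorsionFree G] {H : AddSubgroup G}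
    (hH : H.IsPure) : IsAddTorsionFree (G ⧸ H) := by
  refine IsAddTorsionFree.of_not_isOfFinAddOrder fun q hq hfin => hq ?_
  obtain ⟨x, rfl⟩ := QuotientAddGroup.mk_surjective q
  obtain ⟨n, hn, hnx⟩ := isOfFinAddOrder_iff_nsmul_eq_zero.1 hfin
  rw [← QuotientAddGroup.mk_nsmul, QuotientAddGroup.eq_zero_iff, ← natCast_zsmul] at hnx
  exact (QuotientAddGroup.eq_zero_iff x).2 (hH.mem_of_zsmul_mem hn hnx)

theorem IsPure.exists_isCompl [IsAddTorsionFree G] [AddGroup.FG G] {H : AddSubgroup G}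
    (hH : H.IsPure) : ∃ C : AddSubgroup G, IsCompl H C := by
  have : Module.Finite ℤ G := Module.Finite.iff_addGroup_fg.2 ‹_›
  have : IsAddTorsionFree (G ⧸ H.toIntSubmodule) := hH.isAddTorsionFree_quotient
  obtain ⟨C, hC⟩ := H.toIntSubmodule.exists_isCompl_of_projective_quotient
  exact ⟨C.toAddSubgroup, toIntSubmodule.isCompl_iff.2 hC⟩

theorem exists_extension_of_isCompl {A : Type*} [AddCommGroup A] {H C : AddSubgroup G}
    (h : IsCompl H C) (φ : H →+ A) : ∃ φ' : G →+ A, ∀ x : H, φ' x = φ x := by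
  have h' : IsCompl H.toIntSubmodule C.toIntSubmodule := toIntSubmodule.isCompl h
  refine ⟨(φ.toIntLinearMap ∘ₗ Submodule.projectionOnto _ _ h').toAddMonoidHom, fun x => ?_⟩
  exact congrArg φ (Submodule.projectionOnto_apply_left h' x)

theorem isCompl_addSubgroupOf_map {H K : AddSubgroup G} (hHK : H ≤ K) {C : AddSubgroup K}
    (h : IsCompl (H.addSubgroupOf K) C) : H ⊓ C.map K.subtype = ⊥ ∧ H ⊔ C.map K.subtype = K := by
  have hH : (H.addSubgroupOf K).map K.subtype = H := map_addSubgroupOf_eq_of_le hHK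
  constructor
  · rw [← hH, ← map_inf _ _ _ K.subtype_injective, h.inf_eq_bot, map_bot]
  · rw [← hH, ← map_sup, h.sup_eq_top, ← AddMonoidHom.range_eq_map, range_subtype]

def purification (H : AddSubgroup G) : AddSubgroup G :=
  (AddCommGroup.torsion (G ⧸ H)).comap (QuotientAddGroup.mk' H)

theorem mem_purification {H : AddSubgroup G} {x : G} :
    x ∈ H.purification ↔ ∃ n : ℕ, 0 < n ∧ n • x ∈ H := by
  simp [purification, AddCommGroup.mem_torsion, isOfFinAddOrder_iff_nsmul_eq_zero,
    ← QuotientAddGroup.mk_nsmul]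

theorem le_purification (H : AddSubgroup G) : H ≤ H.purification :=
  fun x hx => mem_purification.2 ⟨1, one_pos, by simpa⟩

theorem isPure_purification (H : AddSubgroup G) : H.purification.IsPure := by
  rintro n hn x hx ⟨y, rfl⟩
  obtain ⟨m, hm, hmy⟩ := mem_purification.1 hx
  refine ⟨y, mem_purification.2 ⟨m * n, Nat.mul_pos hm hn, ?_⟩, rfl⟩
  rwa [natCast_zsmul, ← mul_nsmul'] at hmy

theorem countable_purification [IsAddTorsionFree G] (H : AddSubgroup G) [Countable H] :
    Countable H.purification := by
  have hsub : (H.purification : Set G) ⊆ ⋃ n : ℕ, ((n + 1) • ·) ⁻¹' H := by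
    intro x hx
    obtain ⟨n, hn, hnx⟩ := mem_purification.1 hx
    exact Set.mem_iUnion.2 ⟨n - 1, by rwa [Nat.sub_add_cancel hn]⟩
  exact Set.Countable.to_subtype <| (Set.countable_iUnion fun n =>
    (Set.countable_coe_iff.1 ‹_›).preimage (nsmul_right_injective n.succ_ne_zero)).mono hsub

theorem FG.purification {H : AddSubgroup G} (hH : H.FG) [Module.Free ℤ H.purification] :
    H.purification.FG := by
  have : Module.Finite ℤ H :=
    Module.Finite.iff_addGroup_fg.2 ((AddGroup.fg_iff_addSubgroup_fg H).2 hH)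
  let ι : H →ₗ[ℤ] H.purification := (inclusion H.le_purification).toIntLinearMap
  have : Module.Finite ℤ H.purification :=
    Module.finite_of_free_of_isTorsion_quotient (LinearMap.range ι) fun x => by
      obtain ⟨n, hn, hnx⟩ := mem_purification.1 x.2
      refine ⟨n, by omega, ⟨n • x, hnx⟩, Subtype.ext ?_⟩
      simp [ι]
  exact (AddGroup.fg_iff_addSubgroup_fg _).1 (Module.Finite.iff_addGroup_fg.1 this)

end AddSubgroup

/-- The density claim in the proof of Theorem 5.1.  Let `G` be an `ℵ₂`-free abelian group
(every subgroup of cardinality `≤ ℵ₁` is free abelian), `D` a pure, finitely generated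
subgroup of `G`, `φ : D → ℤ` a homomorphism and `g ∈ G`.  Then there is a pure, finitely
generated subgroup `D'` of `G` with `D ⊆ D'`, `g ∈ D'`, a homomorphism `φ' : D' → ℤ`
extending `φ`, and a decomposition `D' = D ⊕ C`. -/
theorem dense_extension_of_partial_hom
    (G : Type) [AddCommGroup G]
    (hG : ∀ S : AddSubgroup G, Cardinal.mk S ≤ Cardinal.aleph 1 → Module.Free ℤ S)
    (D : AddSubgroup G)
    (hDpure : ∀ n : ℕ, 0 < n → ∀ x ∈ D, (∃ g : G, (n : ℤ) • g = x) → ∃ u ∈ D, (n : ℤ) • u = x)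
    (hDfg : D.FG) (φ : ↥D →+ ℤ) (g : G) :
    ∃ D' : AddSubgroup G,
      (∀ n : ℕ, 0 < n → ∀ x ∈ D', (∃ g : G, (n : ℤ) • g = x) → ∃ u ∈ D', (n : ℤ) • u = x) ∧
      D'.FG ∧ D ≤ D' ∧ g ∈ D' ∧
      (∃ φ' : ↥D' →+ ℤ, ∀ (x : G) (hx : x ∈ D) (hx' : x ∈ D'), φ' ⟨x, hx'⟩ = φ ⟨x, hx⟩) ∧
      (∃ C : AddSubgroup G, C ≤ D' ∧ D ⊓ C = ⊥ ∧ D ⊔ C = D') := by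
  classical
  have hfree : ∀ S : AddSubgroup G, Countable S → Module.Free ℤ S := fun S _ =>
    hG S (Cardinal.mk_le_aleph0.trans (Cardinal.aleph0_le_aleph 1))
  have := isAddTorsionFree_of_forall_countable_free_s17 hfree
  obtain ⟨S, hS⟩ := hDfg
  set E := AddSubgroup.closure (insert g (S : Set G))
  have hEfg : E.FG := ⟨insert g S, by simp [E]⟩
  have : Countable E := Finsupp.Countable.of_moduleFinite (R := ℤ) (M := E)
  have : Module.Free ℤ E.purification := hfree _ E.countable_purification
  have hDE : D ≤ E.purification := by
    rw [← hS]
    exact (AddSubgroup.closure_mono (Set.subset_insert _ _)).trans E.le_purification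
  have : AddGroup.FG E.purification := (AddGroup.fg_iff_addSubgroup_fg _).2 hEfg.purification
  obtain ⟨C, hC⟩ := (AddSubgroup.IsPure.addSubgroupOf hDpure E.purification).exists_isCompl
  obtain ⟨φ', hφ'⟩ := AddSubgroup.exists_extension_of_isCompl hC
    (φ.comp (AddSubgroup.addSubgroupOfEquivOfLe hDE).toAddMonoidHom)
  exact ⟨E.purification, E.isPure_purification, hEfg.purification, hDE,
    E.le_purification (AddSubgroup.subset_closure (Set.mem_insert g _)),
    ⟨φ', fun x hx hx' => hφ' ⟨⟨x, hx'⟩, hx⟩⟩, C.map (AddSubgroup.subtype _),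
    AddSubgroup.map_subtype_le C, AddSubgroup.isCompl_addSubgroupOf_map hDE hC⟩
end
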